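/- Let C be a convex subset of a topological real vector space, and let A, B be faces of C with closure(A) ≠ closure(B). Then fri A ∩ fri B = ∅. -/

import Mathlib

open Pointwise

/-- A face of a convex set `C`: a convex subset `F ⊆ C` such that whenever a point of `F`
lies in the open segment between two points of `C`, both endpoints belong to `F`. -/
def IsFace {X : Type*} [AddCommGroup X] [Module ℝ X] (C F : Set X) : Prop :=
  F ⊆ C ∧ Convex ℝ F ∧
    ∀ x ∈ F, ∀ y ∈ C, ∀ z ∈ C, x ∈ openSegment ℝ y z → y ∈ F ∧ z ∈ F

/-- The minimal face of `C` containing `x`: the intersection of all faces containing `x`. -/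
def minFace {X : Type*} [AddCommGroup X] [Module ℝ X] (C : Set X) (x : X) : Set X :=
  ⋂₀ {F | IsFace C F ∧ x ∈ F}

/-- The conic hull of a set. -/
def coneHull {X : Type*} [AddCommGroup X] [Module ℝ X] (S : Set X) : Set X :=
  {w | ∃ (a : ℝ) (s : X), 0 ≤ a ∧ s ∈ S ∧ w = a • s}

/-- The intrinsic core of a convex set. -/
def icr {X : Type*} [AddCommGroup X] [Module ℝ X] (C : Set X) : Set X :=
  {x ∈ C | ∀ y ∈ C, ∃ z ∈ C, x ∈ openSegment ℝ y z}

/-- The face relative interior of a convex set in a topological vector space. -/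
def fri {X : Type*} [AddCommGroup X] [Module ℝ X] [TopologicalSpace X] (C : Set X) : Set X :=
  {x ∈ C | C ⊆ closure (minFace C x)}

/-!
If `x` lies in a face `A` of `C`, the faces of `A` containing `x` are exactly the traces on `A`
of the faces of `C` containing `x`, so the minimal face of `x` is the same in `A` as in `C`.
Hence `x ∈ fri A` forces `closure A = closure (minFace C x)`, which does not depend on `A`.
-/

section Faces

variable {X : Type*} [AddCommGroup X] [Module ℝ X] {C A F : Set X} {x : X}

lemma Convex.isFace_self (hC : Convex ℝ C) : IsFace C C :=
  ⟨subset_rfl, hC, fun _ _ _ hy _ hz _ => ⟨hy, hz⟩⟩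

lemma IsFace.trans (hA : IsFace C A) (hF : IsFace A F) : IsFace C F := by
  refine ⟨hF.1.trans hA.1, hF.2.1, fun w hw y hy z hz hseg => ?_⟩
  obtain ⟨hyA, hzA⟩ := hA.2.2 w (hF.1 hw) y hy z hz hseg
  exact hF.2.2 w hw y hyA z hzA hseg

lemma IsFace.inter_of_subset (hF : IsFace C F) (hAC : A ⊆ C) (hA : Convex ℝ A) :
    IsFace A (F ∩ A) := by
  refine ⟨Set.inter_subset_right, hF.2.1.inter hA, fun w hw y hy z hz hseg => ?_⟩
  obtain ⟨hyF, hzF⟩ := hF.2.2 w hw.1 y (hAC hy) z (hAC hz) hseg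
  exact ⟨⟨hyF, hy⟩, ⟨hzF, hz⟩⟩

lemma minFace_subset (hF : IsFace C F) (hx : x ∈ F) : minFace C x ⊆ F :=
  Set.sInter_subset_of_mem ⟨hF, hx⟩

lemma IsFace.minFace_eq (hA : IsFace C A) (hx : x ∈ A) : minFace A x = minFace C x := by
  apply subset_antisymm
  · rintro y hy F ⟨hF, hxF⟩
    exact (hy (F ∩ A) ⟨hF.inter_of_subset hA.1 hA.2.1, hxF, hx⟩).1
  · rintro y hy F ⟨hF, hxF⟩
    exact hy F ⟨hA.trans hF, hxF⟩

lemma closure_eq_closure_minFace_of_mem_fri [TopologicalSpace X] (hA : Convex ℝ A)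
    (hx : x ∈ fri A) : closure A = closure (minFace A x) :=
  subset_antisymm (closure_minimal hx.2 isClosed_closure)
    (closure_mono (minFace_subset hA.isFace_self hx.1))

end Faces

theorem fri_disjoint_of_closure_ne_general {X : Type*} [AddCommGroup X] [Module ℝ X]
    [TopologicalSpace X]
    (C A B : Set X) (hA : IsFace C A) (hB : IsFace C B)
    (hne : closure A ≠ closure B) :
    fri A ∩ fri B = ∅ := by
  refine Set.eq_empty_of_forall_notMem fun x ⟨hxA, hxB⟩ => hne ?_
  rw [closure_eq_closure_minFace_of_mem_fri hA.2.1 hxA, closure_eq_closure_minFace_of_mem_fri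
    hB.2.1 hxB, hA.minFace_eq hxA.1, hB.minFace_eq hxB.1]

/-- faces of `C` that are not closure-equivalent have disjoint
face relative interiors. -/
theorem fri_disjoint_of_closure_ne {X : Type*} [AddCommGroup X] [Module ℝ X]
    [TopologicalSpace X] [IsTopologicalAddGroup X] [ContinuousSMul ℝ X]
    (C A B : Set X) (hC : Convex ℝ C) (hA : IsFace C A) (hB : IsFace C B)
    (hne : closure A ≠ closure B) :
    fri A ∩ fri B = ∅ :=
  fri_disjoint_of_closure_ne_general C A B hA hB hne
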